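/- Every spatial QoS satisfaction game with N players has the finite improvement property: any sequence of asynchronous better response updates terminates at a pure Nash equilibrium within at most 4N + 3N² updates, regardless of the initial strategy profile and the update order. -/

import Mathlib

open Finset

/-- Local congestion: number of players in the closed neighborhood of `n`
(including `n` itself) using channel `c`. -/
def lcong {N C : ℕ} (G : SimpleGraph (Fin N)) [DecidableRel G.Adj]
    (x : Fin N → Option (Fin C)) (n : Fin N) (c : Fin C) : ℕ :=
  (Finset.univ.filter fun m => (m = n ∨ G.Adj n m) ∧ x m = some c).card

/-- Utility of player `n` in a spatial QoS satisfaction game. -/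
def sutil {N C : ℕ} (G : SimpleGraph (Fin N)) [DecidableRel G.Adj]
    (T : Fin N → Fin C → ℤ) (x : Fin N → Option (Fin C)) (n : Fin N) : ℤ :=
  match x n with
  | none => 0
  | some c => if (lcong G x n c : ℤ) ≤ T n c then 1 else -1

/-- The potential function Φ: the sum of the thresholds which the non-dormant users
associate with their channels, minus (for each channel) the number of edges linking
users of that channel (counted as half the number of ordered adjacent same-channel
pairs), minus half the number of users of that channel. -/
noncomputable def Phi {N C : ℕ} (G : SimpleGraph (Fin N)) [DecidableRel G.Adj]
    (T : Fin N → Fin C → ℤ) (x : Fin N → Option (Fin C)) : ℚ :=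
  (∑ n : Fin N, match x n with
    | none => (0 : ℚ)
    | some c => (T n c : ℚ))
  - ∑ c : Fin C,
      ((((Finset.univ.filter fun p : Fin N × Fin N =>
            G.Adj p.1 p.2 ∧ x p.1 = some c ∧ x p.2 = some c).card : ℚ) / 2)
        + ((Finset.univ.filter fun n => x n = some c).card : ℚ) / 2)

/-- A better response update: some player unilaterally changes strategy and strictly
increases its own utility. -/
def IsBR {N C : ℕ} (G : SimpleGraph (Fin N)) [DecidableRel G.Adj]
    (T : Fin N → Fin C → ℤ) (x y : Fin N → Option (Fin C)) : Prop :=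
  ∃ (n : Fin N) (s : Option (Fin C)),
    y = Function.update x n s ∧ sutil G T x n < sutil G T y n

/-- Pure Nash equilibrium of a spatial QoS satisfaction game. -/
def IsNashS {N C : ℕ} (G : SimpleGraph (Fin N)) [DecidableRel G.Adj]
    (T : Fin N → Fin C → ℤ) (x : Fin N → Option (Fin C)) : Prop :=
  ∀ (n : Fin N) (s : Option (Fin C)),
    sutil G T (Function.update x n s) n ≤ sutil G T x n

section Aux
variable {N C : ℕ} (G : SimpleGraph (Fin N)) [DecidableRel G.Adj]

/-- neighbors (excluding n) of n using channel c -/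
def nbc (x : Fin N → Option (Fin C)) (n : Fin N) (c : Fin C) : ℕ :=
  (Finset.univ.filter fun m => G.Adj n m ∧ x m = some c).card

lemma nbc_update (x : Fin N → Option (Fin C)) (n : Fin N) (s : Option (Fin C)) (c : Fin C) :
    nbc G (Function.update x n s) n c = nbc G x n c := by
  unfold nbc
  congr 1
  ext m
  simp only [mem_filter, mem_univ, true_and]
  constructor
  · rintro ⟨hadj, hx⟩
    have hm : m ≠ n := by rintro rfl; exact G.irrefl hadj
    rw [Function.update_of_ne hm] at hx
    exact ⟨hadj, hx⟩
  · rintro ⟨hadj, hx⟩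
    have hm : m ≠ n := by rintro rfl; exact G.irrefl hadj
    rw [Function.update_of_ne hm]
    exact ⟨hadj, hx⟩

lemma lcong_eq (x : Fin N → Option (Fin C)) (n : Fin N) (c : Fin C) :
    lcong G x n c = nbc G x n c + (if x n = some c then 1 else 0) := by
  unfold lcong nbc
  rw [Finset.card_filter, Finset.card_filter]
  rw [← Finset.sum_erase_add _ _ (mem_univ n), ← Finset.sum_erase_add _
    (fun m => if G.Adj n m ∧ x m = some c then 1 else 0) (mem_univ n)]
  have h1 : ∀ m ∈ univ.erase n,
      (if (m = n ∨ G.Adj n m) ∧ x m = some c then 1 else 0)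
        = (if G.Adj n m ∧ x m = some c then 1 else 0) := by
    intro m hm
    have : m ≠ n := Finset.ne_of_mem_erase hm
    simp [this]
  rw [Finset.sum_congr rfl h1]
  have h2 : (if (n = n ∨ G.Adj n n) ∧ x n = some c then 1 else 0)
      = (if x n = some c then 1 else 0) := by simp
  have h3 : (if G.Adj n n ∧ x n = some c then 1 else 0) = 0 := by simp
  rw [h2, h3]
  omega

lemma lcong_le (x : Fin N → Option (Fin C)) (n : Fin N) (c : Fin C) :
    lcong G x n c ≤ N :=
  le_trans (Finset.card_filter_le _ _) (by simp)

lemma lcong_pos (x : Fin N → Option (Fin C)) (n : Fin N) (c : Fin C)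
    (hxn : x n = some c) : 1 ≤ lcong G x n c :=
  Finset.card_pos.mpr ⟨n, by simp [lcong, hxn]⟩

lemma sum_update_eq (F : Fin N → Option (Fin C) → ℚ)
    (x : Fin N → Option (Fin C)) (n : Fin N) (s : Option (Fin C)) :
    ∑ m, F m (Function.update x n s m)
      = (∑ m, F m (x m)) + (F n s - F n (x n)) := by
  rw [← Finset.sum_erase_add _ _ (mem_univ n),
    ← Finset.sum_erase_add _ (fun m => F m (x m)) (mem_univ n),
    Function.update_self]
  rw [Finset.sum_congr rfl (fun m hm => by
    rw [Function.update_of_ne (Finset.ne_of_mem_erase hm)])]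
  ring

lemma sum2_update_eq (H : Fin N → Fin N → Option (Fin C) → Option (Fin C) → ℚ)
    (x : Fin N → Option (Fin C)) (n : Fin N) (s : Option (Fin C))
    (hnn : ∀ u v, H n n u v = 0) :
    ∑ a, ∑ b, H a b (Function.update x n s a) (Function.update x n s b)
      = (∑ a, ∑ b, H a b (x a) (x b))
        + (∑ b, (H n b s (x b) - H n b (x n) (x b)))
        + (∑ a, (H a n (x a) s - H a n (x a) (x n))) := by
  have key : ∀ v, ∑ b, H n b v (Function.update x n s b) = ∑ b, H n b v (x b) := by
    intro v
    refine Finset.sum_congr rfl fun b _ => ?_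
    by_cases hb : b = n
    · subst hb; rw [hnn, hnn]
    · rw [Function.update_of_ne hb]
  rw [sum_update_eq (fun a v => ∑ b, H a b v (Function.update x n s b)) x n s]
  rw [key, key, Finset.sum_comm,
    sum_update_eq (fun b v => ∑ a, H a b (x a) v) x n s, Finset.sum_comm,
    Finset.sum_sub_distrib, Finset.sum_sub_distrib]
  ring

end Aux


section Aux2
variable {N C : ℕ} (G : SimpleGraph (Fin N)) [DecidableRel G.Adj]

def optT (T : Fin N → Fin C → ℤ) (n : Fin N) : Option (Fin C) → ℚ
  | none => 0
  | some c => (T n c : ℚ)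

noncomputable def pairQ (x : Fin N → Option (Fin C)) (c : Fin C) : ℚ :=
  ((Finset.univ.filter fun p : Fin N × Fin N =>
      G.Adj p.1 p.2 ∧ x p.1 = some c ∧ x p.2 = some c).card : ℚ)

noncomputable def userQ (x : Fin N → Option (Fin C)) (c : Fin C) : ℚ :=
  ((Finset.univ.filter fun m => x m = some c).card : ℚ)

lemma Phi_eq (T : Fin N → Fin C → ℤ) (x : Fin N → Option (Fin C)) :
    Phi G T x = (∑ n, optT T n (x n))
      - ∑ c, (pairQ G x c / 2 + userQ x c / 2) := by
  unfold Phi pairQ userQ optT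
  congr 1

lemma pairQ_eq_sum (x : Fin N → Option (Fin C)) (c : Fin C) :
    pairQ G x c = ∑ a, ∑ b,
      (if G.Adj a b ∧ x a = some c ∧ x b = some c then (1:ℚ) else 0) := by
  unfold pairQ
  rw [Finset.card_filter]
  push_cast
  rw [← Finset.univ_product_univ, Finset.sum_product]

lemma userQ_eq_sum (x : Fin N → Option (Fin C)) (c : Fin C) :
    userQ x c = ∑ m, (if x m = some c then (1:ℚ) else 0) := by
  unfold userQ
  rw [Finset.card_filter]
  push_cast
  rfl

/-- contribution of a strategy to channel-c congestion around n -/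
noncomputable def dd (x : Fin N → Option (Fin C)) (n : Fin N) (c : Fin C) :
    Option (Fin C) → ℚ :=
  fun v => if v = some c then (nbc G x n c : ℚ) else 0

def ee (c : Fin C) : Option (Fin C) → ℚ :=
  fun v => if v = some c then (1:ℚ) else 0

lemma pairQ_update (x : Fin N → Option (Fin C)) (n : Fin N) (s : Option (Fin C))
    (c : Fin C) :
    pairQ G (Function.update x n s) c
      = pairQ G x c + 2 * (dd G x n c s - dd G x n c (x n)) := by
  rw [pairQ_eq_sum, pairQ_eq_sum,
    sum2_update_eq (fun a b u v => if G.Adj a b ∧ u = some c ∧ v = some c then (1:ℚ) else 0)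
      x n s (by intro u v; simp)]
  have hb : ∀ v, (∑ b, if G.Adj n b ∧ v = some c ∧ x b = some c then (1:ℚ) else 0)
      = dd G x n c v := by
    intro v
    by_cases hv : v = some c
    · simp only [hv, dd, if_pos rfl, true_and]
      rw [nbc, Finset.card_filter]
      push_cast
      rfl
    · simp [dd, hv]
  have ha : ∀ v, (∑ a, if G.Adj a n ∧ x a = some c ∧ v = some c then (1:ℚ) else 0)
      = dd G x n c v := by
    intro v
    by_cases hv : v = some c
    · simp only [hv, dd, if_pos rfl, and_true]
      rw [nbc, Finset.card_filter]
      push_cast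
      refine Finset.sum_congr rfl fun a _ => ?_
      exact if_congr (and_congr_left' (G.adj_comm a n)) rfl rfl
    · simp [dd, hv]
  rw [Finset.sum_sub_distrib, Finset.sum_sub_distrib, hb, hb, ha, ha]
  ring

lemma userQ_update (x : Fin N → Option (Fin C)) (n : Fin N) (s : Option (Fin C))
    (c : Fin C) :
    userQ (Function.update x n s) c = userQ x c + (ee c s - ee c (x n)) := by
  rw [userQ_eq_sum, userQ_eq_sum,
    sum_update_eq (fun _ v => if v = some c then (1:ℚ) else 0) x n s]
  rfl

lemma sum_dd (x : Fin N → Option (Fin C)) (n : Fin N) (v : Option (Fin C)) :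
    ∑ c, dd G x n c v
      = (match v with | none => (0:ℚ) | some c0 => (nbc G x n c0 : ℚ)) := by
  cases v with
  | none => simp [dd]
  | some c0 => simp [dd, Finset.sum_ite_eq]

lemma sum_ee (v : Option (Fin C)) :
    ∑ c, ee c v = (match v with | none => (0:ℚ) | some _ => (1:ℚ)) := by
  cases v with
  | none => simp [ee]
  | some c0 => simp [ee, Finset.sum_ite_eq]

noncomputable def fval (T : Fin N → Fin C → ℤ) (x : Fin N → Option (Fin C))
    (n : Fin N) : Option (Fin C) → ℚ
  | none => 0
  | some c => (T n c : ℚ) - (nbc G x n c : ℚ) - 1/2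

lemma Phi_update (T : Fin N → Fin C → ℤ) (x : Fin N → Option (Fin C))
    (n : Fin N) (s : Option (Fin C)) :
    Phi G T (Function.update x n s)
      = Phi G T x + (fval G T x n s - fval G T x n (x n)) := by
  rw [Phi_eq, Phi_eq, sum_update_eq (optT T) x n s]
  have hc : ∀ c ∈ (univ : Finset (Fin C)),
      pairQ G (Function.update x n s) c / 2 + userQ (Function.update x n s) c / 2
        = (pairQ G x c / 2 + userQ x c / 2)
          + ((dd G x n c s - dd G x n c (x n)) + (ee c s - ee c (x n)) / 2) := by
    intro c _
    rw [pairQ_update G x n s c, userQ_update x n s c]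
    ring
  rw [Finset.sum_congr rfl hc, Finset.sum_add_distrib, Finset.sum_add_distrib,
    Finset.sum_add_distrib, Finset.sum_sub_distrib]
  have hee : ∑ c : Fin C, (ee c s - ee c (x n)) / 2
      = ((∑ c : Fin C, ee c s) - ∑ c : Fin C, ee c (x n)) / 2 := by
    rw [← Finset.sum_div, Finset.sum_sub_distrib]
  rw [hee, sum_dd, sum_dd, sum_ee, sum_ee]
  have hval : ∀ v : Option (Fin C),
      optT T n v
        - (match v with | none => (0:ℚ) | some c0 => (nbc G x n c0 : ℚ))
        - (match v with | none => (0:ℚ) | some _ => (1:ℚ)) / 2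
      = fval G T x n v := by
    intro v
    cases v <;> simp [optT, fval]
  have h1 := hval s
  have h2 := hval (x n)
  linarith

end Aux2


section Aux3
variable {N C : ℕ} (G : SimpleGraph (Fin N)) [DecidableRel G.Adj]

lemma br_step (T : Fin N → Fin C → ℤ) (x y : Fin N → Option (Fin C))
    (hbr : IsBR G T x y) :
    Phi G (fun n c => max 0 (min (T n c) (N:ℤ))) x + 1/2
      ≤ Phi G (fun n c => max 0 (min (T n c) (N:ℤ))) y := by
  set T' : Fin N → Fin C → ℤ := fun n c => max 0 (min (T n c) (N:ℤ)) with hT'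
  obtain ⟨n, s, rfl, hlt⟩ := hbr
  rw [Phi_update G T' x n s]
  rcases hxn : x n with _ | c <;> rcases hs : s with _ | c'
  · -- none → none
    exfalso
    have hy : Function.update x n s = x := by
      rw [hs, ← hxn]; exact Function.update_eq_self n x
    rw [hy] at hlt
    exact lt_irrefl _ hlt
  · -- none → some c'
    have h0 : sutil G T x n = 0 := by simp [sutil, hxn]
    have hy : (Function.update x n s) n = some c' := by
      rw [Function.update_self, hs]
    have h1 : sutil G T (Function.update x n s) n
        = if (lcong G (Function.update x n s) n c' : ℤ) ≤ T n c' then 1 else -1 := by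
      simp [sutil, hs]
    rw [h0, h1] at hlt
    have hcond : (lcong G (Function.update x n s) n c' : ℤ) ≤ T n c' := by
      by_contra hc
      rw [if_neg hc] at hlt
      omega
    have hl1 : lcong G (Function.update x n s) n c' = nbc G x n c' + 1 := by
      rw [lcong_eq, nbc_update, hy, if_pos rfl]
    have hlN : lcong G (Function.update x n s) n c' ≤ N :=
      lcong_le G _ n c'
    rw [hl1] at hcond hlN
    push_cast at hcond
    have key : (nbc G x n c' : ℤ) + 1 ≤ T' n c' := by
      rw [hT']
      simp only []
      omega
    have keyQ : (nbc G x n c' : ℚ) + 1 ≤ (T' n c' : ℚ) := by exact_mod_cast key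
    simp only [fval]
    linarith
  · -- some c → none
    have hy : (Function.update x n s) n = none := by rw [Function.update_self, hs]
    have h0 : sutil G T (Function.update x n s) n = 0 := by simp [sutil, hs]
    have h1 : sutil G T x n = if (lcong G x n c : ℤ) ≤ T n c then 1 else -1 := by
      simp [sutil, hxn]
    rw [h0, h1] at hlt
    have hcond : ¬ (lcong G x n c : ℤ) ≤ T n c := by
      intro hc
      rw [if_pos hc] at hlt
      omega
    have hl1 : lcong G x n c = nbc G x n c + 1 := by
      rw [lcong_eq, hxn, if_pos rfl]
    rw [hl1] at hcond
    push_cast at hcond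
    have key : T' n c ≤ (nbc G x n c : ℤ) := by
      rw [hT']
      simp only []
      omega
    have keyQ : (T' n c : ℚ) ≤ (nbc G x n c : ℚ) := by exact_mod_cast key
    simp only [fval]
    linarith
  · -- some c → some c'
    have hy : (Function.update x n s) n = some c' := by rw [Function.update_self, hs]
    have h0 : sutil G T x n = if (lcong G x n c : ℤ) ≤ T n c then 1 else -1 := by
      simp [sutil, hxn]
    have h1 : sutil G T (Function.update x n s) n
        = if (lcong G (Function.update x n s) n c' : ℤ) ≤ T n c' then 1 else -1 := by
      simp [sutil, hs]
    rw [h0, h1] at hlt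
    have hold : ¬ (lcong G x n c : ℤ) ≤ T n c := by
      intro hc
      rw [if_pos hc] at hlt
      split at hlt <;> omega
    have hnew : (lcong G (Function.update x n s) n c' : ℤ) ≤ T n c' := by
      by_contra hc
      rw [if_neg hc] at hlt
      split at hlt <;> omega
    have hl1 : lcong G x n c = nbc G x n c + 1 := by
      rw [lcong_eq, hxn, if_pos rfl]
    have hl2 : lcong G (Function.update x n s) n c' = nbc G x n c' + 1 := by
      rw [lcong_eq, nbc_update, hy, if_pos rfl]
    have hlN : lcong G (Function.update x n s) n c' ≤ N :=
      lcong_le G _ n c'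
    rw [hl1] at hold
    rw [hl2] at hnew hlN
    push_cast at hold hnew
    have key1 : T' n c ≤ (nbc G x n c : ℤ) := by
      rw [hT']; simp only []; omega
    have key2 : (nbc G x n c' : ℤ) + 1 ≤ T' n c' := by
      rw [hT']; simp only []; omega
    have keyQ1 : (T' n c : ℚ) ≤ (nbc G x n c : ℚ) := by exact_mod_cast key1
    have keyQ2 : (nbc G x n c' : ℚ) + 1 ≤ (T' n c' : ℚ) := by exact_mod_cast key2
    simp only [fval]
    linarith

lemma sum_card_disj {α : Type*} [Fintype α] [DecidableEq α]
    (P : Fin C → α → Prop) [∀ c, DecidablePred (P c)]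
    (huniq : ∀ a c c', P c a → P c' a → c = c') :
    ∑ c, (Finset.univ.filter (P c)).card ≤ Fintype.card α := by
  rw [← Finset.card_biUnion (by
    intro c _ c' _ hne
    rw [Function.onFun, Finset.disjoint_left]
    intro a ha ha'
    rw [Finset.mem_filter] at ha ha'
    exact hne (huniq a c c' ha.2 ha'.2))]
  exact le_trans (Finset.card_le_univ _) (by simp)

lemma Phi_upper (T : Fin N → Fin C → ℤ) (hT : ∀ n c, T n c ≤ (N:ℤ))
    (x : Fin N → Option (Fin C)) : Phi G T x ≤ (N:ℚ)^2 := by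
  rw [Phi_eq]
  have hA : ∑ m, optT T m (x m) ≤ ∑ _m : Fin N, (N:ℚ) := by
    refine Finset.sum_le_sum fun m _ => ?_
    cases hxm : x m with
    | none => simp [optT]
    | some c =>
      simp only [optT]
      exact_mod_cast hT m c
  have hA2 : ∑ _m : Fin N, (N:ℚ) = (N:ℚ)^2 := by
    rw [Finset.sum_const, Finset.card_univ]
    simp [sq]
  have hS : (0:ℚ) ≤ ∑ c, (pairQ G x c / 2 + userQ x c / 2) := by
    refine Finset.sum_nonneg fun c _ => ?_
    have h1 : (0:ℚ) ≤ pairQ G x c := Nat.cast_nonneg _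
    have h2 : (0:ℚ) ≤ userQ x c := Nat.cast_nonneg _
    linarith
  linarith [hA.trans_eq hA2]

lemma Phi_lower (T : Fin N → Fin C → ℤ) (hT0 : ∀ n c, 0 ≤ T n c)
    (x : Fin N → Option (Fin C)) : -(((N:ℚ)^2 + N)/2) ≤ Phi G T x := by
  rw [Phi_eq]
  have hA : (0:ℚ) ≤ ∑ m, optT T m (x m) := by
    refine Finset.sum_nonneg fun m _ => ?_
    cases hxm : x m with
    | none => simp [optT]
    | some c =>
      simp only [optT]
      exact_mod_cast hT0 m c
  have hP : ∑ c : Fin C, (Finset.univ.filter fun p : Fin N × Fin N =>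
      G.Adj p.1 p.2 ∧ x p.1 = some c ∧ x p.2 = some c).card ≤ N * N := by
    have := sum_card_disj (α := Fin N × Fin N)
      (fun c p => G.Adj p.1 p.2 ∧ x p.1 = some c ∧ x p.2 = some c)
      (by
        rintro p c c' ⟨-, hc, -⟩ ⟨-, hc', -⟩
        exact Option.some_injective _ (hc ▸ hc'))
    simpa using this
  have hU : ∑ c : Fin C, (Finset.univ.filter fun m => x m = some c).card ≤ N := by
    have := sum_card_disj (α := Fin N)
      (fun c m => x m = some c)
      (by
        intro m c c' hc hc'
        exact Option.some_injective _ (hc ▸ hc'))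
    simpa using this
  have hPq : ∑ c, pairQ G x c ≤ ((N:ℚ) * N) := by
    unfold pairQ
    rw [← Nat.cast_sum]
    exact_mod_cast hP
  have hUq : ∑ c, userQ x c ≤ (N:ℚ) := by
    unfold userQ
    rw [← Nat.cast_sum]
    exact_mod_cast hU
  have hsplit : ∑ c, (pairQ G x c / 2 + userQ x c / 2)
      = (∑ c, pairQ G x c) / 2 + (∑ c, userQ x c) / 2 := by
    rw [Finset.sum_add_distrib, ← Finset.sum_div, ← Finset.sum_div]
  rw [hsplit]
  have : (N:ℚ)*N = (N:ℚ)^2 := (sq (N:ℚ)).symm ▸ by ring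
  nlinarith [hPq, hUq, hA]

end Aux3


/-- Finite improvement property: any asynchronous better response update process
(where at each step the process either is at a pure Nash equilibrium and stays put,
or some single player performs a better response update) reaches a pure Nash
equilibrium within at most `4N + 3N²` updates. -/
theorem finite_improvement_property {N C : ℕ} (G : SimpleGraph (Fin N))
    [DecidableRel G.Adj] (T : Fin N → Fin C → ℤ)
    (x : ℕ → Fin N → Option (Fin C))
    (h : ∀ t : ℕ, (x (t + 1) = x t ∧ IsNashS G T (x t)) ∨ IsBR G T (x t) (x (t + 1))) :
    ∃ t ≤ 4 * N + 3 * N ^ 2, IsNashS G T (x t) := by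
  set T' : Fin N → Fin C → ℤ := fun n c => max 0 (min (T n c) (N:ℤ)) with hT'
  by_contra hcon
  push_neg at hcon
  have hN : 1 ≤ N := by
    by_contra hN0
    have hN' : N = 0 := by omega
    subst hN'
    exact hcon 0 (by omega) (fun n => n.elim0)
  set K := 4 * N + 3 * N ^ 2 with hK
  have hbr : ∀ t, t < K → IsBR G T (x t) (x (t + 1)) := by
    intro t ht
    rcases h t with ⟨_, hnash⟩ | hb
    · exact absurd hnash (hcon t (le_of_lt ht))
    · exact hb
  have grow : ∀ t, t ≤ K → Phi G T' (x 0) + t / 2 ≤ Phi G T' (x t) := by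
    intro t
    induction t with
    | zero => intro _; simp
    | succ t ih =>
      intro ht
      have h1 := ih (by omega)
      have h2 := br_step G T (x t) (x (t + 1)) (hbr t (by omega))
      rw [← hT'] at h2
      push_cast
      push_cast at h1
      linarith
  have hup : Phi G T' (x K) ≤ (N:ℚ)^2 :=
    Phi_upper G T' (fun n c => by rw [hT']; simp) (x K)
  have hlo : -(((N:ℚ)^2 + N)/2) ≤ Phi G T' (x 0) :=
    Phi_lower G T' (fun n c => by rw [hT']; simp) (x 0)
  have hg := grow K le_rfl
  have hKQ : (K:ℚ) = 4*N + 3*(N:ℚ)^2 := by rw [hK]; push_cast; ring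
  have hNQ : (1:ℚ) ≤ N := by exact_mod_cast hN
  rw [hKQ] at hg
  linarith
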